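/- arXiv:0904.4083 — 2 statements merged into one kernel-verified Lean document; each statement's English description precedes it below -/
import Mathlib

section
/- Let e_z, e_x, e_y be real numbers such that q_i := (1+e_z+e_x+e_y)/4, q_z := (1+e_z−e_x−e_y)/4, q_x := (1−e_z+e_x−e_y)/4, q_y := (1−e_z−e_x+e_y)/4 are all nonnegative, let A, B ∈ SO(3), and let R = B·diag(e_z,e_x,e_y)·A. Set H := −(q_i log₂ q_i + q_z log₂ q_z + q_x log₂ q_x + q_y log₂ q_y) and K(R) := 1 − H + h₂((1+‖R e₁‖)/2) − h₂((1+R₁₁)/2). Then K(R) = 1 − H if and only if R₂₁ = 0 and R₃₁ = 0 (equivalently, the first column of R is a scalar multiple of the first standard basis vector). -/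
/-- Binary entropy function (base-2 logarithm), with the convention `0 * log 0 = 0`. -/
noncomputable def h2 (p : ℝ) : ℝ := -(p * Real.logb 2 p) - (1 - p) * Real.logb 2 (1 - p)

/-- `M` is a real 3×3 special orthogonal matrix. -/
def SO3 (M : Matrix (Fin 3) (Fin 3) ℝ) : Prop := M.transpose * M = 1 ∧ M.det = 1

/-- Euclidean norm of the first column of a 3×3 real matrix. -/
noncomputable def colNorm3 (M : Matrix (Fin 3) (Fin 3) ℝ) : ℝ :=
  Real.sqrt ((M 0 0) ^ 2 + (M 1 0) ^ 2 + (M 2 0) ^ 2)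

/-!
Both binary entropies are evaluated at points `(1 + t) / 2` with `t ∈ [-1, 1]`: the first column of
`R = B · diag(e) · A` has norm at most `1`, because `B` preserves it and `|eᵢ| ≤ 1` follows from the
nonnegativity of the weights `qᵢ`. On such points `h₂` is even in `t` and strictly decreasing in
`|t|`, so the two entropies agree iff `‖R e₁‖ = |R₁₁|`.
-/

open Matrix

lemma h2_eq_binEntropy (p : ℝ) : h2 p = Real.binEntropy p / Real.log 2 := by
  unfold h2 Real.binEntropy
  rw [Real.log_inv, Real.log_inv, Real.logb, Real.logb]
  ring

lemma h2_one_sub (p : ℝ) : h2 (1 - p) = h2 p := by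
  rw [h2_eq_binEntropy, h2_eq_binEntropy, Real.binEntropy_one_sub]

lemma h2_one_add_abs_div_two (t : ℝ) : h2 ((1 + |t|) / 2) = h2 ((1 + t) / 2) := by
  rcases abs_cases t with ⟨ht, -⟩ | ⟨ht, -⟩
  · rw [ht]
  · rw [ht, ← h2_one_sub]; ring_nf

lemma h2_one_add_div_two_strictAntiOn :
    StrictAntiOn (fun t : ℝ ↦ h2 ((1 + t) / 2)) (Set.Icc 0 1) := by
  intro a ⟨ha0, ha1⟩ b ⟨hb0, hb1⟩ hab
  simp only [h2_eq_binEntropy]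
  gcongr ?_ / _
  exact Real.binEntropy_strictAntiOn ⟨by linarith, by linarith⟩ ⟨by linarith, by linarith⟩
    (by linarith)

section ColumnNorms

variable {n : Type*} [Fintype n]

lemma sum_sq_apply_eq_transpose_mul_self (M : Matrix n n ℝ) (j : n) :
    ∑ i, M i j ^ 2 = (Mᵀ * M) j j := by
  simp only [mul_apply, transpose_apply, sq]

lemma sum_sq_mul_apply_of_transpose_mul_self [DecidableEq n] {B : Matrix n n ℝ} (hB : Bᵀ * B = 1)
    (M : Matrix n n ℝ) (j : n) : ∑ i, (B * M) i j ^ 2 = ∑ i, M i j ^ 2 := by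
  rw [sum_sq_apply_eq_transpose_mul_self, sum_sq_apply_eq_transpose_mul_self, transpose_mul,
    Matrix.mul_assoc, ← Matrix.mul_assoc Bᵀ, hB, Matrix.one_mul]

lemma sum_sq_diagonal_mul_apply_le_one [DecidableEq n] {A : Matrix n n ℝ} (hA : Aᵀ * A = 1)
    {e : n → ℝ} (he : ∀ i, |e i| ≤ 1) (j : n) : ∑ i, (diagonal e * A) i j ^ 2 ≤ 1 := by
  calc ∑ i, (diagonal e * A) i j ^ 2 = ∑ i, e i ^ 2 * A i j ^ 2 := by
        simp only [diagonal_mul, mul_pow]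
    _ ≤ ∑ i, A i j ^ 2 := by
        gcongr with i
        exact mul_le_of_le_one_left (sq_nonneg _) (sq_le_one_iff_abs_le_one _ |>.mpr (he i))
    _ = 1 := by rw [sum_sq_apply_eq_transpose_mul_self, hA, one_apply_eq]

end ColumnNorms

lemma colNorm3_eq_sqrt_sum (M : Matrix (Fin 3) (Fin 3) ℝ) :
    colNorm3 M = √(∑ i, M i 0 ^ 2) := by
  rw [colNorm3, Fin.sum_univ_three]

lemma abs_le_colNorm3 (M : Matrix (Fin 3) (Fin 3) ℝ) : |M 0 0| ≤ colNorm3 M := by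
  rw [← Real.sqrt_sq_eq_abs, colNorm3]
  gcongr
  nlinarith [sq_nonneg (M 1 0), sq_nonneg (M 2 0)]

lemma colNorm3_eq_abs_iff (M : Matrix (Fin 3) (Fin 3) ℝ) :
    colNorm3 M = |M 0 0| ↔ M 1 0 = 0 ∧ M 2 0 = 0 := by
  rw [colNorm3, ← Real.sqrt_sq_eq_abs,
    Real.sqrt_inj (by positivity) (sq_nonneg _)]
  constructor
  · intro h
    constructor <;> nlinarith [sq_nonneg (M 1 0), sq_nonneg (M 2 0)]
  · rintro ⟨h1, h2⟩
    simp [h1, h2]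

theorem stmt3_general (ez ex ey : ℝ)
    (hqi : 0 ≤ (1 + ez + ex + ey) / 4) (hqz : 0 ≤ (1 + ez - ex - ey) / 4)
    (hqx : 0 ≤ (1 - ez + ex - ey) / 4) (hqy : 0 ≤ (1 - ez - ex + ey) / 4)
    (A B : Matrix (Fin 3) (Fin 3) ℝ) (hA : SO3 A) (hB : SO3 B)
    (R : Matrix (Fin 3) (Fin 3) ℝ)
    (hR : R = B * Matrix.diagonal ![ez, ex, ey] * A)
    (H : ℝ) :
    1 - H + h2 ((1 + colNorm3 R) / 2) - h2 ((1 + R 0 0) / 2) = 1 - H ↔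
      (R 1 0 = 0 ∧ R 2 0 = 0) := by
  have he : ∀ i, |![ez, ex, ey] i| ≤ 1 := by
    simp only [Fin.forall_fin_succ, IsEmpty.forall_iff, and_true, cons_val_zero, cons_val_succ,
      abs_le]
    refine ⟨⟨?_, ?_⟩, ⟨?_, ?_⟩, ⟨?_, ?_⟩⟩ <;> linarith
  have hnorm_le : colNorm3 R ≤ 1 := by
    rw [colNorm3_eq_sqrt_sum, hR, Matrix.mul_assoc, sum_sq_mul_apply_of_transpose_mul_self hB.1,
      Real.sqrt_le_one]
    exact sum_sq_diagonal_mul_apply_le_one hA.1 he 0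
  have habs_le := abs_le_colNorm3 R
  rw [← colNorm3_eq_abs_iff, ← h2_one_add_abs_div_two (R 0 0), add_sub_assoc, add_eq_left,
    sub_eq_zero]
  exact h2_one_add_div_two_strictAntiOn.injOn.eq_iff ⟨(abs_nonneg _).trans habs_le, hnorm_le⟩
    ⟨abs_nonneg _, habs_le.trans hnorm_le⟩

theorem stmt3 (ez ex ey : ℝ)
    (hqi : 0 ≤ (1 + ez + ex + ey) / 4) (hqz : 0 ≤ (1 + ez - ex - ey) / 4)
    (hqx : 0 ≤ (1 - ez + ex - ey) / 4) (hqy : 0 ≤ (1 - ez - ex + ey) / 4)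
    (A B : Matrix (Fin 3) (Fin 3) ℝ) (hA : SO3 A) (hB : SO3 B)
    (R : Matrix (Fin 3) (Fin 3) ℝ)
    (hR : R = B * Matrix.diagonal ![ez, ex, ey] * A)
    (H : ℝ)
    (hH : H = -((1 + ez + ex + ey) / 4 * Real.logb 2 ((1 + ez + ex + ey) / 4)
      + (1 + ez - ex - ey) / 4 * Real.logb 2 ((1 + ez - ex - ey) / 4)
      + (1 - ez + ex - ey) / 4 * Real.logb 2 ((1 - ez + ex - ey) / 4)
      + (1 - ez - ex + ey) / 4 * Real.logb 2 ((1 - ez - ex + ey) / 4))) :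
    1 - H + h2 ((1 + colNorm3 R) / 2) - h2 ((1 + R 0 0) / 2) = 1 - H ↔
      (R 1 0 = 0 ∧ R 2 0 = 0) :=
  stmt3_general ez ex ey hqi hqz hqx hqy A B hA hB R hR H
end

section
/- The function f defined on [0,1] by f(x) = h₂((1+√x)/2) is concave on [0,1]. -/
open Real Set

lemma h2_eq_binEntropy_div_log_two (p : ℝ) : h2 p = binEntropy p / log 2 := by
  simp only [h2, binEntropy, logb, log_inv]
  ring

lemma hasSum_log_sub_log_div_self {s : ℝ} (h : |s| < 1) (hs : s ≠ 0) :
    HasSum (fun k : ℕ => 2 / (2 * k + 1) * s ^ (2 * k)) ((log (1 + s) - log (1 - s)) / s) := by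
  have hterm : (fun k : ℕ => 2 / (2 * k + 1) * s ^ (2 * k)) =
      fun k : ℕ => 2 * (1 / (2 * k + 1)) * s ^ (2 * k + 1) / s := by
    funext k
    rw [pow_succ]
    field_simp
  rw [hterm]
  exact (hasSum_log_sub_log_of_abs_lt_one h).div_const s

lemma monotoneOn_log_sub_log_div_self :
    MonotoneOn (fun s => (log (1 + s) - log (1 - s)) / s) (Ioo 0 1) := by
  intro s hs t ht hst
  have habs {u : ℝ} (hu : u ∈ Ioo 0 1) : |u| < 1 := by
    rw [abs_of_pos hu.1]
    exact hu.2
  refine hasSum_le (fun k => ?_) (hasSum_log_sub_log_div_self (habs hs) hs.1.ne')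
    (hasSum_log_sub_log_div_self (habs ht) ht.1.ne')
  gcongr
  exact hs.1.le

lemma sqrt_mem_Ioo_zero_one {x : ℝ} (hx : x ∈ Ioo 0 1) : √x ∈ Ioo 0 1 :=
  ⟨sqrt_pos.2 hx.1, (sqrt_lt' one_pos).2 (by simpa using hx.2)⟩

lemma hasDerivAt_binEntropy_one_add_sqrt_div_two {x : ℝ} (hx : x ∈ Ioo 0 1) :
    HasDerivAt (fun x => binEntropy ((1 + √x) / 2))
      (-((log (1 + √x) - log (1 - √x)) / √x) / 4) x := by
  obtain ⟨hs0, hs1⟩ := sqrt_mem_Ioo_zero_one hx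
  have hp := ((hasDerivAt_sqrt hx.1.ne').const_add 1).div_const 2
  refine ((hasDerivAt_binEntropy (p := (1 + √x) / 2) (by positivity) (by linarith)).comp x
    hp).congr_deriv ?_
  rw [show 1 - (1 + √x) / 2 = (1 - √x) / 2 by ring, log_div (by linarith) two_ne_zero,
    log_div (by linarith) two_ne_zero]
  field_simp
  ring

lemma concaveOn_binEntropy_one_add_sqrt_div_two :
    ConcaveOn ℝ (Icc 0 1) (fun x => binEntropy ((1 + √x) / 2)) := by
  refine AntitoneOn.concaveOn_of_deriv (convex_Icc 0 1) (by fun_prop) ?_ ?_ <;>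
    rw [interior_Icc]
  · exact fun x hx =>
      (hasDerivAt_binEntropy_one_add_sqrt_div_two hx).differentiableAt.differentiableWithinAt
  · intro x hx y hy hxy
    rw [(hasDerivAt_binEntropy_one_add_sqrt_div_two hx).deriv,
      (hasDerivAt_binEntropy_one_add_sqrt_div_two hy).deriv]
    have hmono := monotoneOn_log_sub_log_div_self (sqrt_mem_Ioo_zero_one hx)
      (sqrt_mem_Ioo_zero_one hy) (sqrt_le_sqrt hxy)
    dsimp only at hmono
    linarith

theorem stmt8 :
    ConcaveOn ℝ (Set.Icc (0 : ℝ) 1) (fun x => h2 ((1 + Real.sqrt x) / 2)) := by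
  have h := concaveOn_binEntropy_one_add_sqrt_div_two.smul (inv_nonneg.2 (log_nonneg one_le_two))
  simpa only [h2_eq_binEntropy_div_log_two, smul_eq_mul, div_eq_inv_mul] using h
end
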